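/- (Cigler's odd identity) For all k, m ≥ 1 and n ≥ 0, det(C_{2k-1, i+j+2-k-m})_{i,j=0}^{n+m+k-2} = (-1)^{binom(m+k-1,2)} · det(C_{2k-1, i+j+1-k+m})_{i,j=0}^{n-1}, where an empty determinant equals 1. -/

import Mathlib

/-!
Write `c = C^K` for the Catalan series `C`, so that `c⁻¹ = (1 - X C)^K =: ∑ eₜ Xᵗ`, and let `E` be
the unitriangular Toeplitz matrix of `e`. Congruence by `E` does not change the determinant of
`H = (c_{i+j-s})` (`s = k + m - 2`), and since `e * c = 1` the truncated double convolutions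
forming `E H Eᵀ` collapse: it is block triangular, with an `(s+1)`-block that is anti-triangular
with unit antidiagonal (determinant the sign of the reversal, `(-1)^binom(s+1,2)`) and an
`n`-block `(-e_{i+j+s+2})`. For `K = 2k - 1` the series `XC` and `1 - XC` are the roots of
`Z² - Z + X`, so `(XC)^K + (1 - XC)^K` is a polynomial of degree `< k`, i.e. `-eₜ = C_{K,t-K}` for
`t ≥ k`: the second block is the shifted Hankel matrix.
-/

/-- Convoluted Catalan number `C_{K,p}` for natural `p`, with the
convention `binom(n,-1) = 0`. -/
def convCatalan (K p : ℕ) : ℤ :=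
  ((2 * p + K - 1).choose p : ℤ) -
    (if p = 0 then 0 else ((2 * p + K - 1).choose (p - 1) : ℤ))

/-- Convoluted Catalan number for an integer index: `C_{K,p} = 0` for `p < 0`. -/
def convCatalanZ (K : ℕ) (p : ℤ) : ℤ :=
  if p < 0 then 0 else convCatalan K p.toNat

/-- The Hankel determinant `D_{K,M}(N) = det(C_{K,i+j+M})_{i,j=0}^{N-1}`
(equal to `1` for `N = 0`). -/
def hankelDet (K : ℕ) (M : ℤ) (N : ℕ) : ℤ :=
  Matrix.det (Matrix.of fun i j : Fin N => convCatalanZ K ((i : ℕ) + (j : ℕ) + M))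

open Finset Matrix PowerSeries

section Antidiagonal

open Equiv

lemma finRotate_mul_revPerm (r : ℕ) :
    finRotate (r + 1) * Fin.revPerm = Perm.decomposeFin.symm (0, Fin.revPerm) := by
  ext i
  induction i using Fin.cases with
  | zero => simp [Perm.decomposeFin_symm_apply_zero]
  | succ i =>
    rw [Perm.decomposeFin_symm_apply_succ]
    simp only [Perm.mul_apply, Fin.revPerm_apply, Fin.rev_succ, swap_self, refl_apply,
      finRotate_apply, Fin.val_add_one_of_lt (Fin.castSucc_lt_last _)]
    simp

lemma sign_revPerm (n : ℕ) : Perm.sign (Fin.revPerm : Perm (Fin n)) = (-1) ^ n.choose 2 := by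
  induction n with
  | zero => rfl
  | succ r ih =>
    have h := congrArg Perm.sign (finRotate_mul_revPerm r)
    rw [map_mul, sign_finRotate, Nat.succ_sub_one, Perm.decomposeFin.symm_sign, if_pos rfl,
      one_mul, ih] at h
    calc Perm.sign (Fin.revPerm : Perm (Fin (r + 1)))
        = ((-1) ^ r * (-1) ^ r) * Perm.sign (Fin.revPerm : Perm (Fin (r + 1))) := by
          rw [← pow_add, ← two_mul, pow_mul, Int.units_sq, one_pow, one_mul]
      _ = (-1) ^ (r + 1).choose 2 := by
          rw [mul_assoc, h, ← pow_add, Nat.choose_succ_succ, Nat.choose_one_right, add_comm]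

variable {R : Type*} [CommRing R]

lemma det_of_antitriangular {n : ℕ} (A : Matrix (Fin n) (Fin n) R)
    (h0 : ∀ i j : Fin n, (i : ℕ) + j + 1 < n → A i j = 0)
    (h1 : ∀ i j : Fin n, (i : ℕ) + j + 1 = n → A i j = 1) :
    A.det = (-1) ^ n.choose 2 := by
  have hrev : ∀ i : Fin n, ((Fin.revPerm i : Fin n) : ℕ) = n - 1 - i := fun i => by
    simp [Fin.val_rev]; omega
  have hU : (A.submatrix Fin.revPerm id).det = 1 := by
    rw [det_of_isUpperTriangular (M := A.submatrix Fin.revPerm id)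
      fun i j (hij : j < i) => h0 _ _ (by rw [hrev, id]; have := Fin.lt_def.1 hij; omega)]
    exact prod_eq_one fun i _ => h1 _ _ (by rw [id, hrev]; omega)
  rw [det_permute, sign_revPerm] at hU
  push_cast at hU
  calc A.det = (-1) ^ n.choose 2 * ((-1) ^ n.choose 2 * A.det) := by
        rw [← mul_assoc, ← mul_pow, neg_one_mul, neg_neg, one_pow, one_mul]
    _ = (-1) ^ n.choose 2 := by rw [hU, mul_one]

end Antidiagonal

section HankelReduction

variable {R : Type*} [CommRing R]

def hankel (c : ℤ → R) (M : ℤ) (N : ℕ) : Matrix (Fin N) (Fin N) R :=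
  of fun i j => c (i + j + M)

def lowerToeplitz (e : ℕ → R) (N : ℕ) : Matrix (Fin N) (Fin N) R :=
  of fun i j => if (j : ℕ) ≤ i then e (i - j) else 0

lemma det_lowerToeplitz {e : ℕ → R} (he0 : e 0 = 1) (N : ℕ) : (lowerToeplitz e N).det = 1 := by
  rw [det_of_isLowerTriangular (lowerToeplitz e N) fun i j (hij : i < j) => if_neg (not_le.2 hij)]
  simp [lowerToeplitz, he0]

lemma sum_lowerToeplitz_mul (e : ℕ → R) {N : ℕ} (i : Fin N) (g : ℕ → R) :
    ∑ x : Fin N, lowerToeplitz e N i x * g x = ∑ t ∈ range (i + 1), e t * g (i - t) := by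
  simp only [lowerToeplitz, of_apply, ite_mul, zero_mul]
  rw [Fin.sum_univ_eq_sum_range (fun x => if x ≤ (i : ℕ) then e (i - x) * g x else 0), ← sum_filter,
    show (range N).filter (· ≤ (i : ℕ)) = range (i + 1) by ext; simp; omega,
    ← sum_range_reflect]
  refine sum_congr rfl fun t ht => ?_
  rw [mem_range] at ht
  rw [show (i : ℕ) + 1 - 1 - t = i - t by omega, Nat.sub_sub_self (by omega)]

variable (e : ℕ → R) (c : ℤ → R)

def truncDoubleConv (i j : ℕ) (r : ℤ) : R :=
  ∑ t ∈ range (i + 1), e t * ∑ u ∈ range (j + 1), e u * c (r - t - u)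

lemma truncDoubleConv_comm (i j : ℕ) (r : ℤ) :
    truncDoubleConv e c i j r = truncDoubleConv e c j i r := by
  simp only [truncDoubleConv, mul_sum]
  rw [sum_comm]
  refine sum_congr rfl fun u _ => sum_congr rfl fun t _ => ?_
  rw [sub_right_comm]; ring

lemma lowerToeplitz_mul_hankel_mul_transpose (s : ℕ) {N : ℕ} (i j : Fin N) :
    (lowerToeplitz e N * hankel c (-s) N * (lowerToeplitz e N)ᵀ) i j =
      truncDoubleConv e c i j (i + j - s) := by
  simp only [mul_apply, transpose_apply, hankel, of_apply]
  simp_rw [mul_comm _ (lowerToeplitz e N j _)]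
  refine (sum_lowerToeplitz_mul e j
    (fun x : ℕ => ∑ y : Fin N, lowerToeplitz e N i y * c (y + x + -s))).trans ?_
  rw [truncDoubleConv_comm, truncDoubleConv]
  refine sum_congr rfl fun u hu => congrArg _
    ((sum_lowerToeplitz_mul e i fun y : ℕ => c (y + (j - u : ℕ) + -s)).trans
    (sum_congr rfl fun t ht => ?_))
  rw [mem_range] at hu ht
  push_cast [Nat.cast_sub (Nat.le_of_lt_succ hu), Nat.cast_sub (Nat.le_of_lt_succ ht)]
  congr 2
  ring

lemma sum_mul_ite_sub_eq_zero (S : Finset ℕ) (f : ℕ → R) (r : ℤ) :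
    ∑ t ∈ S, f t * (if r - t = 0 then 1 else 0) = if 0 ≤ r ∧ r.toNat ∈ S then f r.toNat else 0 := by
  have h : ∀ t : ℕ, r - t = 0 ↔ 0 ≤ r ∧ r.toNat = t := fun t => by omega
  by_cases hr : 0 ≤ r <;> simp [h, hr]

variable {e c} (hc : ∀ p < 0, c p = 0)
  (hconv : ∀ q : ℕ, ∑ x ∈ antidiagonal q, e x.1 * c x.2 = if q = 0 then 1 else 0)
include hc hconv

lemma sum_range_mul_sub_eq_ite {q : ℤ} {M : ℕ} (hq : q < M) :
    ∑ u ∈ range M, e u * c (q - u) = if q = 0 then 1 else 0 := by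
  rcases lt_or_ge q 0 with hneg | hnn
  · rw [if_neg hneg.ne]
    exact sum_eq_zero fun u _ => by rw [hc _ (by omega), mul_zero]
  lift q to ℕ using hnn
  simp only [Nat.cast_eq_zero]
  rw [← hconv q, Nat.sum_antidiagonal_eq_sum_range_succ_mk,
    ← sum_subset (range_subset_range.2 (show q + 1 ≤ M by omega))
      fun u _ hu => by rw [mem_range] at hu; rw [hc _ (by omega), mul_zero]]
  refine sum_congr rfl fun u hu => ?_
  rw [mem_range] at hu
  rw [Nat.cast_sub (by omega)]

lemma truncDoubleConv_of_le {i j : ℕ} {r : ℤ} (hr : r ≤ j) :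
    truncDoubleConv e c i j r = if 0 ≤ r ∧ r ≤ i then e r.toNat else 0 := by
  rw [truncDoubleConv,
    sum_congr rfl fun t _ => by rw [sum_range_mul_sub_eq_ite hc hconv (by omega)],
    sum_mul_ite_sub_eq_zero]
  exact if_congr (by rw [mem_range]; omega) rfl rfl

lemma truncDoubleConv_of_lt {i j : ℕ} {r : ℤ} (hi : i < r) (hj : j < r) (hr : r ≤ i + j + 1) :
    truncDoubleConv e c i j r = -e r.toNat := by
  -- Complete the inner sum to a full convolution, which is `δ_{r,t}` and so contributes nothing
  -- since `i < r`; after swapping the sums, the correction over `u > j` is again a full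
  -- convolution and picks out `u = r`.
  have hsplit : ∀ t : ℕ, ∑ u ∈ range (j + 1), e u * c (r - t - u) =
      ∑ u ∈ range (i + j + 2), e u * c (r - t - u) -
        ∑ u ∈ Ico (j + 1) (i + j + 2), e u * c (r - t - u) := fun t => by
    rw [← sum_range_add_sum_Ico _ (by omega : j + 1 ≤ i + j + 2), add_sub_cancel_right]
  have hfull : ∑ t ∈ range (i + 1), e t * ∑ u ∈ range (i + j + 2), e u * c (r - t - u) = 0 := by
    rw [sum_congr rfl fun t _ => by rw [sum_range_mul_sub_eq_ite hc hconv (by omega)],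
      sum_mul_ite_sub_eq_zero, if_neg (by rw [mem_range]; omega)]
  have htail : ∑ t ∈ range (i + 1), e t * ∑ u ∈ Ico (j + 1) (i + j + 2), e u * c (r - t - u) =
      e r.toNat := by
    refine Eq.trans ?_ ((sum_mul_ite_sub_eq_zero (Ico (j + 1) (i + j + 2)) e r).trans
      (if_pos ⟨by omega, by rw [mem_Ico]; omega⟩))
    simp only [mul_sum]
    rw [sum_comm]
    refine sum_congr rfl fun u hu => ?_
    rw [mem_Ico] at hu
    rw [← sum_range_mul_sub_eq_ite hc hconv (show r - u < (i + 1 : ℕ) by omega), mul_sum]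
    refine sum_congr rfl fun t _ => ?_
    rw [sub_right_comm]
    ring
  rw [truncDoubleConv, sum_congr rfl fun t _ => by rw [hsplit t], ← htail]
  simp only [mul_sub, sum_sub_distrib, hfull, zero_sub]

theorem det_hankel_eq_neg_one_pow_mul_det (he0 : e 0 = 1) (s n : ℕ) :
    (hankel c (-s) (s + 1 + n)).det =
      (-1) ^ (s + 1).choose 2 * (of fun x y : Fin n => -e (x + y + s + 2)).det := by
  set G := lowerToeplitz e (s + 1 + n) * hankel c (-s) (s + 1 + n) * (lowerToeplitz e (s + 1 + n))ᵀ
  set B := G.submatrix finSumFinEquiv finSumFinEquiv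
  have hG : G.det = (hankel c (-s) (s + 1 + n)).det := by
    simp only [G, det_mul, det_transpose, det_lowerToeplitz he0, one_mul, mul_one]
  have hB₂₁ : B.toBlocks₂₁ = 0 := by
    ext x y
    simp only [B, G, toBlocks₂₁, of_apply, submatrix_apply, finSumFinEquiv_apply_left,
      finSumFinEquiv_apply_right, lowerToeplitz_mul_hankel_mul_transpose, Fin.val_castAdd,
      Fin.val_natAdd, Matrix.zero_apply]
    rw [truncDoubleConv_comm, truncDoubleConv_of_le hc hconv (by omega), if_neg (by omega)]
  have hB₁₁ : B.toBlocks₁₁.det = (-1) ^ (s + 1).choose 2 := by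
    apply det_of_antitriangular <;> intro x y hxy <;>
      simp only [B, G, toBlocks₁₁, of_apply, submatrix_apply, finSumFinEquiv_apply_left,
        lowerToeplitz_mul_hankel_mul_transpose, Fin.val_castAdd] <;>
      rw [truncDoubleConv_of_le hc hconv (by omega)]
    · exact if_neg (by omega)
    · rw [if_pos (by omega), show ((x : ℕ) + (y : ℕ) - s : ℤ).toNat = 0 by omega, he0]
  have hB₂₂ : B.toBlocks₂₂ = of fun x y : Fin n => -e (x + y + s + 2) := by
    ext x y
    simp only [B, G, toBlocks₂₂, of_apply, submatrix_apply, finSumFinEquiv_apply_right,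
      lowerToeplitz_mul_hankel_mul_transpose, Fin.val_natAdd]
    rw [truncDoubleConv_of_lt hc hconv (by omega) (by omega) (by omega)]
    congr 2
    omega
  have hGB : G.det = B.det := (det_submatrix_equiv_self _ _).symm
  rw [← hG, hGB, ← fromBlocks_toBlocks B, hB₂₁, det_fromBlocks_zero₂₁, hB₁₁, hB₂₂]

end HankelReduction



section ConvolutedCatalan

lemma coeff_pow_add_pow_eq_zero {R : Type*} [CommRing R] {u v : R⟦X⟧} (huv : u + v = 1)
    (hmul : u * v = X) {d q : ℕ} (hdq : d < 2 * q) : coeff q (u ^ d + v ^ d) = 0 := by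
  induction d using Nat.strong_induction_on generalizing q with
  | _ d ih =>
    match d, hdq with
    | 0, _ => simp [coeff_one, show q ≠ 0 by omega]
    | 1, _ => rw [pow_one, pow_one, huv, coeff_one, if_neg (by omega)]
    | d + 2, hdq =>
      obtain ⟨q, rfl⟩ : ∃ q', q = q' + 1 := ⟨q - 1, by omega⟩
      have hrec : u ^ (d + 2) + v ^ (d + 2) =
          (u ^ (d + 1) + v ^ (d + 1)) - X * (u ^ d + v ^ d) := by
        linear_combination (u ^ (d + 1) + v ^ (d + 1)) * huv - (u ^ d + v ^ d) * hmul
      rw [hrec, map_sub, coeff_succ_X_mul, ih _ (by omega) (by omega), ih _ (by omega) (by omega),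
        sub_zero]

lemma convCatalan_zero_right (K : ℕ) : convCatalan K 0 = 1 := by simp [convCatalan]

lemma convCatalan_succ (K p : ℕ) :
    convCatalan K (p + 1) = ((2 * p + K + 1).choose (p + 1) : ℤ) - (2 * p + K + 1).choose p := by
  rw [convCatalan, if_neg p.succ_ne_zero, show 2 * (p + 1) + K - 1 = 2 * p + K + 1 by omega,
    Nat.add_sub_cancel]

lemma convCatalan_zero_succ (p : ℕ) : convCatalan 0 (p + 1) = 0 := by
  rw [convCatalan_succ, add_zero, Nat.choose_symm_half, sub_self]

lemma convCatalan_succ_succ (K p : ℕ) :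
    convCatalan (K + 1) (p + 1) = convCatalan K (p + 1) + convCatalan (K + 2) p := by
  cases p with
  | zero => simp [convCatalan_succ, convCatalan_zero_right]
  | succ p =>
    rw [convCatalan_succ, convCatalan_succ, convCatalan_succ,
      show 2 * (p + 1) + (K + 1) + 1 = (2 * p + K + 3) + 1 by ring,
      show 2 * (p + 1) + K + 1 = 2 * p + K + 3 by ring,
      show 2 * p + (K + 2) + 1 = 2 * p + K + 3 by ring,
      Nat.choose_succ_succ' (2 * p + K + 3) (p + 1), Nat.choose_succ_succ' (2 * p + K + 3) p]
    push_cast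
    ring

noncomputable def intCatalanSeries : ℤ⟦X⟧ := map (Nat.castRingHom ℤ) catalanSeries

lemma intCatalanSeries_eq : intCatalanSeries = 1 + X * intCatalanSeries ^ 2 := by
  have h := congrArg (map (Nat.castRingHom ℤ)) catalanSeries_sq_mul_X_add_one
  simp only [map_add, map_mul, map_pow, map_X, map_one] at h
  rw [intCatalanSeries]
  linear_combination h.symm

lemma constantCoeff_intCatalanSeries : constantCoeff intCatalanSeries = 1 := by
  rw [← coeff_zero_eq_constantCoeff_apply, intCatalanSeries, coeff_map]
  simp

lemma coeff_intCatalanSeries_pow (p K : ℕ) :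
    coeff p (intCatalanSeries ^ K) = convCatalan K p := by
  induction p generalizing K with
  | zero => simp [constantCoeff_intCatalanSeries, convCatalan_zero_right]
  | succ p ih =>
    induction K with
    | zero => simp [convCatalan_zero_succ]
    | succ K ihK =>
      have hrec : intCatalanSeries ^ (K + 1) =
          intCatalanSeries ^ K + X * intCatalanSeries ^ (K + 2) := by
        linear_combination intCatalanSeries ^ K * intCatalanSeries_eq
      rw [hrec, map_add, coeff_succ_X_mul, ihK, ih, convCatalan_succ_succ]

lemma hankelDet_eq_det_hankel (K : ℕ) (M : ℤ) (N : ℕ) :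
    hankelDet K M N = (hankel (convCatalanZ K) M N).det :=
  rfl

lemma convCatalanZ_natCast (K p : ℕ) : convCatalanZ K p = coeff p (intCatalanSeries ^ K) := by
  rw [convCatalanZ, if_neg (by omega), Int.toNat_natCast, coeff_intCatalanSeries_pow]

lemma coeff_X_mul_intCatalanSeries_pow (K t : ℕ) :
    coeff t ((X * intCatalanSeries) ^ K) = convCatalanZ K (t - K) := by
  rw [mul_pow, coeff_X_pow_mul']
  split_ifs with h
  · rw [← Nat.cast_sub h, convCatalanZ_natCast]
  · rw [convCatalanZ, if_pos (by omega)]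

lemma one_sub_X_mul_intCatalanSeries_mul : (1 - X * intCatalanSeries) * intCatalanSeries = 1 := by
  linear_combination intCatalanSeries_eq

lemma coeff_one_sub_X_mul_intCatalanSeries_pow {a t : ℕ} (ht : a < t) :
    coeff t ((1 - X * intCatalanSeries) ^ (2 * a + 1)) =
      -convCatalanZ (2 * a + 1) (t - (2 * a + 1)) := by
  have h := coeff_pow_add_pow_eq_zero (u := X * intCatalanSeries) (add_sub_cancel _ _)
    (by linear_combination X * one_sub_X_mul_intCatalanSeries_mul) (by omega : 2 * a + 1 < 2 * t)
  rw [map_add, coeff_X_mul_intCatalanSeries_pow] at h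
  push_cast at h
  linear_combination h

lemma sum_antidiagonal_coeff_mul_convCatalanZ (K q : ℕ) :
    ∑ x ∈ antidiagonal q, coeff x.1 ((1 - X * intCatalanSeries) ^ K) * convCatalanZ K x.2 =
      if q = 0 then 1 else 0 := by
  simp only [convCatalanZ_natCast]
  rw [← coeff_mul, ← mul_pow, one_sub_X_mul_intCatalanSeries_mul, one_pow, coeff_one]

end ConvolutedCatalan

/-- Cigler's odd identity. -/
theorem cigler_odd (k m n : ℕ) (hk : 1 ≤ k) (hm : 1 ≤ m) :
    hankelDet (2 * k - 1) (2 - (k : ℤ) - m) (n + m + k - 1) =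
      (-1) ^ ((m + k - 1).choose 2) * hankelDet (2 * k - 1) (1 - (k : ℤ) + m) n := by
  obtain ⟨a, rfl⟩ : ∃ a, k = a + 1 := ⟨k - 1, by omega⟩
  obtain ⟨b, rfl⟩ : ∃ b, m = b + 1 := ⟨m - 1, by omega⟩
  have key := det_hankel_eq_neg_one_pow_mul_det (c := convCatalanZ (2 * a + 1))
    (e := fun t => coeff t ((1 - X * intCatalanSeries) ^ (2 * a + 1))) (fun p hp => if_pos hp)
    (sum_antidiagonal_coeff_mul_convCatalanZ (2 * a + 1))
    (by simp [constantCoeff_intCatalanSeries])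
    (a + b) n
  rw [hankelDet_eq_det_hankel, hankelDet_eq_det_hankel, show 2 * (a + 1) - 1 = 2 * a + 1 by omega,
    show n + (b + 1) + (a + 1) - 1 = a + b + 1 + n by omega,
    show b + 1 + (a + 1) - 1 = a + b + 1 by omega,
    show (2 : ℤ) - (a + 1 : ℕ) - (b + 1 : ℕ) = -(a + b : ℕ) by push_cast; ring, key]
  congr 2
  ext x y
  rw [hankel, of_apply, of_apply, coeff_one_sub_X_mul_intCatalanSeries_pow (by omega), neg_neg]
  congr 1
  push_cast
  ring
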